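/- arXiv:2403.18020 — 2 statements merged into one kernel-verified Lean document; each statement's English description precedes it below -/
import Mathlib

section
/- Let J be a finite index type, let n : J → Type be finite types, let p : J → ℝ be a probability vector (p j ≥ 0 for all j and Σ_j p j = 1), and for each j let ρ_j be a density matrix indexed by n j. Let σ = Matrix.blockDiagonal' (fun j => p j • ρ_j), a matrix indexed by the sigma type Σ j, n j. Then σ is a density matrix and its spectral von Neumann entropy satisfies S(σ) = Σ_j negMulLog(p j) + Σ_j p j * S(ρ_j). (This is the entropy chain rule for orthogonally supported mixtures underlying the paper's Theorem 2.) -/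
/-!
The eigenvalues of a block-diagonal matrix are those of its blocks, since its characteristic
polynomial is the product of theirs, and the eigenvalues of `p • ρ` are `p` times those of `ρ`.
Hence `S(σ) = Σ_j Σ_i negMulLog (p_j λ_ji)`, and `negMulLog (x y) = y negMulLog x + x negMulLog y`
together with `Σ_i λ_ji = tr ρ_j = 1` splits each inner sum into `negMulLog p_j + p_j S(ρ_j)`.
-/

open Matrix
open scoped ComplexOrder

/-- The spectral von Neumann entropy of a Hermitian matrix: the sum of
`negMulLog` over its eigenvalues counted with multiplicity. -/
noncomputable def vonNeumannEntropy {n : Type*} [Fintype n] [DecidableEq n]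
    {ρ : Matrix n n ℂ} (hρ : ρ.IsHermitian) : ℝ :=
  ∑ i, Real.negMulLog (hρ.eigenvalues i)

open Polynomial

theorem Real.sum_negMulLog_mul_of_sum_eq_one {ι : Type*} {s : Finset ι} (c : ℝ) {q : ι → ℝ}
    (hq : ∑ i ∈ s, q i = 1) :
    ∑ i ∈ s, Real.negMulLog (c * q i) = Real.negMulLog c + c * ∑ i ∈ s, Real.negMulLog (q i) := by
  simp only [Real.negMulLog_mul, Finset.sum_add_distrib, ← Finset.sum_mul, ← Finset.mul_sum, hq,
    one_mul]

namespace Matrix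

variable {J : Type*} {n : J → Type*}

theorem toSquareBlock_blockDiagonal' [DecidableEq J] {R : Type*} [Zero R]
    (M : ∀ j, Matrix (n j) (n j) R) (j : J) :
    (blockDiagonal' M).toSquareBlock Sigma.fst j =
      (M j).submatrix (Equiv.sigmaSubtype j) (Equiv.sigmaSubtype j) := by
  ext ⟨⟨a, i⟩, ha⟩ ⟨⟨b, k⟩, hb⟩
  dsimp only at ha hb
  subst ha hb
  simp [toSquareBlock_def, blockDiagonal'_apply_eq]

theorem charpoly_blockDiagonal' [Fintype J] [DecidableEq J] [∀ j, Fintype (n j)]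
    [∀ j, DecidableEq (n j)] {R : Type*} [CommRing R] (M : ∀ j, Matrix (n j) (n j) R) :
    (blockDiagonal' M).charpoly = ∏ j, (M j).charpoly := by
  let : LinearOrder J := LinearOrder.lift' _ (Fintype.equivFin J).injective
  rw [charpoly, (blockTriangular_blockDiagonal' M).charmatrix.det_fintype]
  refine Finset.prod_congr rfl fun j _ => ?_
  rw [← charmatrix_toSquareBlock, toSquareBlock_blockDiagonal', ← charpoly]
  exact charpoly_reindex (Equiv.sigmaSubtype j).symm (M j)

theorem dotProduct_blockDiagonal'_mulVec [Fintype J] [DecidableEq J] [∀ j, Fintype (n j)]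
    {R : Type*} [NonUnitalNonAssocSemiring R] (M : ∀ j, Matrix (n j) (n j) R)
    (x y : (Σ j, n j) → R) :
    x ⬝ᵥ (blockDiagonal' M *ᵥ y) =
      ∑ j, (fun i => x ⟨j, i⟩) ⬝ᵥ (M j *ᵥ fun i => y ⟨j, i⟩) := by
  simp [dotProduct, mulVec, Fintype.sum_sigma, blockDiagonal'_apply, Finset.mul_sum]

theorem PosSemidef.blockDiagonal' [Fintype J] [DecidableEq J] [∀ j, Fintype (n j)]
    {R : Type*} [Ring R] [PartialOrder R] [StarRing R] [IsOrderedAddMonoid R]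
    {M : ∀ j, Matrix (n j) (n j) R} (hM : ∀ j, (M j).PosSemidef) :
    (Matrix.blockDiagonal' M).PosSemidef := by
  refine .of_dotProduct_mulVec_nonneg
    (isHermitian_blockDiagonal'_iff.mpr fun j => (hM j).isHermitian) fun x => ?_
  rw [dotProduct_blockDiagonal'_mulVec]
  exact Finset.sum_nonneg fun j _ => (hM j).dotProduct_mulVec_nonneg _

theorem IsHermitian.charpoly_real_smul {𝕜 m : Type*} [RCLike 𝕜] [Fintype m] [DecidableEq m]
    {A : Matrix m m 𝕜} (hA : A.IsHermitian) (c : ℝ) :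
    ((c : 𝕜) • A).charpoly = ∏ i, (X - C ((c * hA.eigenvalues i : ℝ) : 𝕜)) := by
  rw [← RCLike.real_smul_eq_coe_smul, ← cfc_const_mul_id c A hA.isSelfAdjoint, hA.charpoly_cfc_eq]

theorem IsHermitian.sum_eigenvalues_eq_re_trace {𝕜 m : Type*} [RCLike 𝕜] [Fintype m]
    [DecidableEq m] {A : Matrix m m 𝕜} (hA : A.IsHermitian) :
    ∑ i, hA.eigenvalues i = RCLike.re A.trace := by
  simp [hA.trace_eq_sum_eigenvalues]

end Matrix

theorem vonNeumannEntropy_eq_of_charpoly_eq {m ι : Type*} [Fintype m] [DecidableEq m]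
    [Fintype ι] {A : Matrix m m ℂ} (hA : A.IsHermitian) (d : ι → ℝ)
    (h : A.charpoly = ∏ i, (X - C (d i : ℂ))) :
    vonNeumannEntropy hA = ∑ i, Real.negMulLog (d i) := by
  have hroots := hA.roots_charpoly_eq_eigenvalues
  rw [h, roots_prod _ _ (monic_prod_of_monic _ _ fun i _ => monic_X_sub_C _).ne_zero] at hroots
  simp only [roots_X_sub_C, Multiset.bind_singleton] at hroots
  have hsums := congrArg (fun s => (s.map fun z : ℂ => Real.negMulLog z.re).sum) hroots
  simp only [Multiset.map_map, Function.comp_def, Complex.ofReal_re] at hsums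
  rw [vonNeumannEntropy, Finset.sum_eq_multiset_sum, Finset.sum_eq_multiset_sum]
  exact hsums.symm

/-- Entropy chain rule for an orthogonally supported mixture: if `p` is a
probability vector and each `ρ j` is a density matrix, then the block-diagonal
matrix `σ = blockDiagonal' (fun j => p j • ρ j)` is a density matrix with
`S(σ) = Σ_j negMulLog (p j) + Σ_j p j * S(ρ j)`. -/
theorem entropy_blockDiagonal_mixture {J : Type*} [Fintype J] [DecidableEq J]
    {n : J → Type*} [∀ j, Fintype (n j)] [∀ j, DecidableEq (n j)]
    (p : J → ℝ) (hp0 : ∀ j, 0 ≤ p j) (hp1 : ∑ j, p j = 1)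
    (ρ : ∀ j, Matrix (n j) (n j) ℂ)
    (hρ : ∀ j, (ρ j).PosSemidef) (htr : ∀ j, (ρ j).trace = 1) :
    (Matrix.blockDiagonal' (fun j => ((p j : ℝ) : ℂ) • ρ j)).PosSemidef ∧
    (Matrix.blockDiagonal' (fun j => ((p j : ℝ) : ℂ) • ρ j)).trace = 1 ∧
    ∀ hσ : (Matrix.blockDiagonal' (fun j => ((p j : ℝ) : ℂ) • ρ j)).IsHermitian,
      vonNeumannEntropy hσ =
        ∑ j, Real.negMulLog (p j) + ∑ j, p j * vonNeumannEntropy (hρ j).isHermitian := by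
  refine ⟨.blockDiagonal' fun j => (hρ j).smul (Complex.zero_le_real.mpr (hp0 j)), ?_,
    fun hσ => ?_⟩
  · simp [trace_blockDiagonal', htr, ← Complex.ofReal_sum, hp1]
  have hsum : ∀ j, ∑ i, (hρ j).isHermitian.eigenvalues i = 1 := fun j => by
    simp [(hρ j).isHermitian.sum_eigenvalues_eq_re_trace, htr j]
  rw [vonNeumannEntropy_eq_of_charpoly_eq hσ
      (fun x : Σ j, n j => p x.1 * (hρ x.1).isHermitian.eigenvalues x.2),
    Fintype.sum_sigma, ← Finset.sum_add_distrib]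
  · exact Finset.sum_congr rfl fun j _ => Real.sum_negMulLog_mul_of_sum_eq_one (p j) (hsum j)
  · rw [charpoly_blockDiagonal', Fintype.prod_sigma]
    exact Finset.prod_congr rfl fun j _ => (hρ j).isHermitian.charpoly_real_smul (p j)
end

section
/- Let J be a finite index type, let p : J → ℝ be a probability vector (p j ≥ 0 for all j and Σ_j p j = 1), and let d : J → ℕ with d j ≥ 1 for all j. Let σ be the block-diagonal matrix Matrix.blockDiagonal' (fun j => ((p j / d j : ℝ) : ℂ) • (1 : Matrix (Fin (d j)) (Fin (d j)) ℂ)). Then σ is a density matrix and its spectral von Neumann entropy satisfies S(σ) = Σ_j negMulLog(p j) + Σ_j p j * Real.log (d j). (This is the paper's decomposition E(A|B) = E_p(A|B) + E_0(A|B) with E_p(A|B) = −Σ_j p_j ln p_j and E_0(A|B) = Σ_j p_j ln(2j+1), for the reduced density matrix ρ_A = Σ_j p_j ρ_j^A where each ρ_j^A is maximally mixed on a (2j+1)-dimensional recoupled subspace.) -/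
open Matrix
open scoped ComplexOrder

/-! A block-diagonal matrix of scalar blocks is diagonal, and the eigenvalues of a Hermitian
diagonal matrix are its diagonal entries up to permutation (its characteristic polynomial has
them as roots). Block `j` thus contributes `d j` copies of `p j / d j`, and
`d * negMulLog (p / d) = negMulLog p + p * log d`. -/

namespace Matrix

variable {n 𝕜 : Type*} [Fintype n] [DecidableEq n] [RCLike 𝕜]

open Polynomial in
lemma IsHermitian.map_eigenvalues_of_eq_diagonal (v : n → ℝ)
    (hA : (diagonal fun i => (v i : 𝕜)).IsHermitian) :
    Finset.univ.val.map hA.eigenvalues = Finset.univ.val.map v := by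
  have hroots : (∏ i, (X - C (v i : 𝕜))).roots = Finset.univ.val.map fun i => (v i : 𝕜) := by
    simpa [Multiset.map_map, Function.comp_def] using
      roots_multiset_prod_X_sub_C (Finset.univ.val.map fun i => (v i : 𝕜))
  rw [← charpoly_diagonal, hA.roots_charpoly_eq_eigenvalues] at hroots
  simpa [Multiset.map_map, Function.comp_def] using congrArg (Multiset.map RCLike.re) hroots

lemma IsHermitian.sum_eigenvalues_of_eq_diagonal (v : n → ℝ)
    (hA : (diagonal fun i => (v i : 𝕜)).IsHermitian) (f : ℝ → ℝ) :
    ∑ i, f (hA.eigenvalues i) = ∑ i, f (v i) := by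
  simpa only [Multiset.map_map, Function.comp_def, Finset.sum_map_val] using
    congrArg (fun s => (s.map f).sum) (hA.map_eigenvalues_of_eq_diagonal v)

end Matrix

lemma vonNeumannEntropy_diagonal {n : Type*} [Fintype n] [DecidableEq n] (v : n → ℝ)
    (hρ : (diagonal fun i => (v i : ℂ)).IsHermitian) :
    vonNeumannEntropy hρ = ∑ i, Real.negMulLog (v i) :=
  hρ.sum_eigenvalues_of_eq_diagonal v _

lemma Matrix.blockDiagonal'_smul_one {J α : Type*} [Semiring α] {m : J → Type*}
    [∀ j, Fintype (m j)] [∀ j, DecidableEq (m j)] [DecidableEq J] (c : J → α) :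
    blockDiagonal' (fun j => c j • (1 : Matrix (m j) (m j) α)) =
      diagonal fun ik : Σ j, m j => c ik.1 := by
  simp_rw [smul_one_eq_diagonal, blockDiagonal'_diagonal]

lemma Real.mul_negMulLog_div {d : ℝ} (hd : d ≠ 0) (p : ℝ) :
    d * Real.negMulLog (p / d) = Real.negMulLog p + p * Real.log d := by
  rw [div_eq_mul_inv, Real.negMulLog_mul]
  simp only [Real.negMulLog, Real.log_inv]
  field_simp

/-- For a probability vector `p` and dimensions `d j ≥ 1`, the block-diagonal
matrix whose `j`-th block is the maximally mixed state `p j / d j • 1` on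
`Fin (d j)` is a density matrix with von Neumann entropy
`Σ_j negMulLog (p j) + Σ_j p j * log (d j)`. -/
theorem entropy_blockDiagonal_maximallyMixed {J : Type*} [Fintype J] [DecidableEq J]
    (p : J → ℝ) (hp0 : ∀ j, 0 ≤ p j) (hp1 : ∑ j, p j = 1)
    (d : J → ℕ) (hd : ∀ j, 1 ≤ d j) :
    (Matrix.blockDiagonal' (fun j => ((p j / d j : ℝ) : ℂ) •
        (1 : Matrix (Fin (d j)) (Fin (d j)) ℂ))).PosSemidef ∧
    (Matrix.blockDiagonal' (fun j => ((p j / d j : ℝ) : ℂ) •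
        (1 : Matrix (Fin (d j)) (Fin (d j)) ℂ))).trace = 1 ∧
    ∀ hσ : (Matrix.blockDiagonal' (fun j => ((p j / d j : ℝ) : ℂ) •
        (1 : Matrix (Fin (d j)) (Fin (d j)) ℂ))).IsHermitian,
      vonNeumannEntropy hσ =
        ∑ j, Real.negMulLog (p j) + ∑ j, p j * Real.log (d j) := by
  have hd0 : ∀ j, (d j : ℝ) ≠ 0 := fun j => Nat.cast_ne_zero.mpr (Nat.one_le_iff_ne_zero.mp (hd j))
  rw [blockDiagonal'_smul_one]
  refine ⟨posSemidef_diagonal_iff.mpr fun ik => ?_, ?_, fun hσ => ?_⟩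
  · exact Complex.zero_le_real.mpr (div_nonneg (hp0 _) (Nat.cast_nonneg _))
  · have hblock (j : J) : ∑ _k : Fin (d j), ((p j / d j : ℝ) : ℂ) = p j := by
      rw [Finset.sum_const, Finset.card_fin, nsmul_eq_mul, ← Complex.ofReal_natCast,
        ← Complex.ofReal_mul, mul_div_cancel₀ _ (hd0 j)]
    rw [trace_diagonal, Fintype.sum_sigma]
    simp_rw [hblock]
    exact_mod_cast hp1
  · have hblock (j : J) : ∑ _k : Fin (d j), Real.negMulLog (p j / d j) =
        Real.negMulLog (p j) + p j * Real.log (d j) := by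
      rw [Finset.sum_const, Finset.card_fin, nsmul_eq_mul, Real.mul_negMulLog_div (hd0 j)]
    rw [vonNeumannEntropy_diagonal _ hσ, Fintype.sum_sigma]
    simp_rw [hblock]
    exact Finset.sum_add_distrib
end
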